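/- Let C and V be partial orders and (φ, ψ) a Galois connection between them (φ(c) ≤ v ⇔ c ≤ ψ(v)); set ♭ = φ∘ψ and let J be the quantization Grothendieck topology on V (a sieve on v covers iff it contains ♭(v) ⟶ v). Let g : V ⥤ C be the functor induced by ψ. Then a presheaf Q : V^op ⥤ Type is a sheaf for J if and only if there exists a presheaf P : C^op ⥤ Type such that Q is naturally isomorphic to ψ*P := g.op ⋙ P. -/

import Mathlib

open CategoryTheory

/-- The quantization Grothendieck topology on a partial order `V` induced by a
monotone idempotent deflation `♭ : V → V`: a sieve on `v` covers iff it contains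
the morphism `♭(v) ⟶ v`. -/
def quantTopology {V : Type*} [PartialOrder V] {b : V → V} (hb : Monotone b)
    (hle : ∀ v, b v ≤ v) (hidem : ∀ v, b (b v) = b v) :
    GrothendieckTopology V where
  sieves v := { S | S.arrows (homOfLE (hle v)) }
  top_mem' v := trivial
  pullback_stable' := by
    intro v v' S f hS
    exact S.downward_closed hS (homOfLE (hb (leOfHom f)))
  transitive' := by
    intro v S hS R hR
    have key : ∀ {x y : V} (_ : x = y) (hx : x ≤ v) (hy : y ≤ v),
        R.arrows (homOfLE hx) → R.arrows (homOfLE hy) := by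
      rintro x y rfl hx hy h
      exact h
    exact key (hidem v) ((hle (b v)).trans (hle v)) (hle v) (hR hS)

/-!
Every covering sieve on `v` contains `♭v ⟶ v`, and the principal sieve of `♭v` covers, so a
presheaf is a sheaf exactly when each restriction map `Q(v) → Q(♭v)` is bijective. For `ψ*P`
this holds because `ψ ♭ = ψ`, so `ψ` sends `♭v ≤ v` to an isomorphism. Conversely, when the
restrictions are bijective, whiskering the counit `φψ ⟶ 𝟭` of `φ ⊣ ψ` by `Q` is an isomorphism
`Q ≅ ψ*(φ*Q)`.
-/

open Opposite

namespace CategoryTheory.Presieve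

variable {C : Type*} [Category C] {X Y : C} {P : Cᵒᵖ ⥤ Type*}

lemma isSeparatedFor_of_injective_map {R : Presieve X} {f : Y ⟶ X} (hf : R f)
    (hinj : Function.Injective (P.map f.op)) : IsSeparatedFor P R :=
  fun _ _ _ h₁ h₂ => hinj ((h₁ f hf).trans (h₂ f hf).symm)

lemma isSheafFor_singleton_iff_bijective (f : Y ⟶ X) [Mono f] :
    IsSheafFor P (.singleton f) ↔ Function.Bijective (P.map f.op) := by
  have compatible (x : P.obj (op Y)) {Z : C} (p₁ p₂ : Z ⟶ Y) (h : p₁ ≫ f = p₂ ≫ f) :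
      P.map p₁.op x = P.map p₂.op x := by
    rw [cancel_mono f |>.mp h]
  rw [isSheafFor_singleton, Function.bijective_iff_existsUnique]
  exact forall_congr' fun x => ⟨fun h => h (compatible x), fun h _ => h⟩

end CategoryTheory.Presieve

section QuantTopology

variable {V : Type*} [PartialOrder V] {b : V → V} (hb : Monotone b)
    (hle : ∀ v, b v ≤ v) (hidem : ∀ v, b (b v) = b v)

lemma mem_quantTopology_iff {v : V} (S : Sieve v) :
    S ∈ quantTopology hb hle hidem v ↔ S (homOfLE (hle v)) := Iff.rfl

lemma isSheaf_quantTopology_iff (F : Vᵒᵖ ⥤ Type*) :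
    Presieve.IsSheaf (quantTopology hb hle hidem) F ↔
      ∀ v, Function.Bijective (F.map (homOfLE (hle v)).op) := by
  let J := quantTopology hb hle hidem
  let principal (v : V) : Sieve v := Sieve.generate (.singleton (homOfLE (hle v)))
  have principal_mem (v : V) : principal v ∈ J v :=
    (mem_quantTopology_iff hb hle hidem _).mpr
      (Sieve.le_generate _ _ _ (Presieve.singleton_self _))
  have isSheafFor_principal_iff (v : V) :
      Presieve.IsSheafFor F (principal v).arrows ↔
        Function.Bijective (F.map (homOfLE (hle v)).op) :=
    (Presieve.isSheafFor_iff_generate _).symm.trans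
      (Presieve.isSheafFor_singleton_iff_bijective _)
  simp only [← isSheafFor_principal_iff]
  refine ⟨fun hF v => hF _ (principal_mem v), fun hF v R hR => ?_⟩
  -- Pullbacks of `principal v` cover, so they contain `♭y ⟶ y`, along which `F` is injective.
  refine Presieve.isSheafFor_subsieve_aux F (S := principal v) ?_ (hF v) fun y f _ => ?_
  · exact (Sieve.generate_le_iff _ _).mpr (by rintro _ _ ⟨⟩; exact hR)
  · exact Presieve.isSeparatedFor_of_injective_map (J.pullback_stable f (principal_mem v))
      ((isSheafFor_principal_iff y).mp (hF y)).1

end QuantTopology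

lemma isSheaf_psiStar {C V : Type*} [PartialOrder C] [PartialOrder V]
    {φ : C → V} {ψ : V → C} (gc : GaloisConnection φ ψ) (P : Cᵒᵖ ⥤ Type*) :
    Presieve.IsSheaf
      (quantTopology (gc.monotone_l.comp gc.monotone_u) gc.l_u_le
        (fun v => congrArg φ (gc.u_l_u_eq_u v))) (gc.monotone_u.functor.op ⋙ P) := by
  refine (isSheaf_quantTopology_iff _ _ _ _).mpr fun v => (isIso_iff_bijective _).mp ?_
  have : IsIso (gc.monotone_u.functor.map (homOfLE (gc.l_u_le v))) :=
    homOfLE_isIso_of_eq _ (gc.u_l_u_eq_u v)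
  exact Functor.map_isIso P (gc.monotone_u.functor.map (homOfLE (gc.l_u_le v))).op

theorem isSheaf_iff_iso_psiStar.{w, u, u'}
    {C : Type u} {V : Type u'} [PartialOrder C] [PartialOrder V]
    {φ : C → V} {ψ : V → C} (gc : GaloisConnection φ ψ)
    (Q : Vᵒᵖ ⥤ Type w) :
    Presieve.IsSheaf
      (quantTopology (gc.monotone_l.comp gc.monotone_u) gc.l_u_le
        (fun v => congrArg φ (gc.u_l_u_eq_u v))) Q ↔
      ∃ P : Cᵒᵖ ⥤ Type w, Nonempty (Q ≅ gc.monotone_u.functor.op ⋙ P) := by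
  refine ⟨fun hQ => ?_, fun ⟨P, ⟨e⟩⟩ => Presieve.isSheaf_iso _ e.symm (isSheaf_psiStar gc P)⟩
  let restrict := Functor.whiskerRight (NatTrans.op gc.adjunction.counit) Q
  have (v : Vᵒᵖ) : IsIso (restrict.app v) :=
    (isIso_iff_bijective _).mpr ((isSheaf_quantTopology_iff _ _ _ _).mp hQ v.unop)
  have := NatIso.isIso_of_isIso_app restrict
  exact ⟨gc.monotone_l.functor.op ⋙ Q, ⟨asIso restrict⟩⟩
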